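/- arXiv:2309.08512 — 2 statements merged into one kernel-verified Lean document; each statement's English description precedes it below -/
import Mathlib

section
/- Let G be a finite group and let B ∈ (ℤ[G])^{V×V}. If for some ℓ every entry of B^ℓ lies in u_G·ℤ, then the characteristic polynomial of ℰ(B) divides, up to a power of t, the product of the characteristic polynomial of 𝒜(B) with t^{|V|(|G|-1)}; concretely, χ_{ℰ(B)}(t) = χ_{𝒜(B)}(t) · t^{|V|(|G|-1)}. -/
open MonoidAlgebra Matrix Polynomial

noncomputable def extMat {G V : Type*} [Group G]
    (B : Matrix V V (MonoidAlgebra ℤ G)) : Matrix (V × G) (V × G) ℤ :=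
  fun p q => (B p.1 q.1).coeff (p.2⁻¹ * q.2)

noncomputable def augMat {G V : Type*} [Group G] [Fintype G]
    (B : Matrix V V (MonoidAlgebra ℤ G)) : Matrix V V ℤ :=
  fun i j => ∑ g : G, (B i j).coeff g

noncomputable def uG (G : Type*) [Group G] [Fintype G] : MonoidAlgebra ℤ G :=
  ∑ g : G, single g 1

/-!
`extMat B` is the matrix, in the `ℤ`-basis `V × G` of `ℤ[G]^V`, of the action of `B`, and
`augMat B` is the matrix of its image under the augmentation `ℤ[G] → ℤ`. Conjugating by the shear
that adds the columns `(j, g)` to the column `(j, 1)` and subtracts the row `(i, 1)` from the rows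
`(i, g)` makes `extMat B` block upper triangular, with diagonal blocks `augMat B` and a block `D`
of size `|V| (|G| - 1)`. If the entries of `B ^ ℓ` lie in `ℤ u_G`, the rows `(i, g)` of
`extMat (B ^ ℓ)` do not depend on `g`, so the shear kills the lower rows and `D ^ ℓ = 0`; hence
`χ_D = t ^ (|V| (|G| - 1))`.
-/

section Blocks

variable {R m n : Type*} [CommRing R] [Fintype m] [Fintype n] [DecidableEq m] [DecidableEq n]

theorem Matrix.charpoly_eq_X_pow_of_isNilpotent [IsDomain R] {M : Matrix n n R}
    (hM : IsNilpotent M) : M.charpoly = X ^ Fintype.card n :=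
  sub_eq_zero.mp (isNilpotent_charpoly_sub_pow_of_isNilpotent hM).eq_zero

theorem Matrix.fromBlocks_zero₂₁_pow (A : Matrix m m R) (B : Matrix m n R) (D : Matrix n n R)
    (k : ℕ) : ∃ Y, fromBlocks A B 0 D ^ k = fromBlocks (A ^ k) Y 0 (D ^ k) := by
  induction k with
  | zero => exact ⟨0, by simp [fromBlocks_one]⟩
  | succ k ih =>
    obtain ⟨Y, hY⟩ := ih
    exact ⟨A ^ k * B + Y * D, by simp [pow_succ, hY, fromBlocks_multiply]⟩

theorem Matrix.charpoly_eq_mul_X_pow_of_toBlocks₂₁_eq_zero [IsDomain R]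
    (M : Matrix (m ⊕ n) (m ⊕ n) R) (h₂₁ : M.toBlocks₂₁ = 0)
    (h₂₂ : ∃ k, (M ^ k).toBlocks₂₂ = 0) :
    M.charpoly = M.toBlocks₁₁.charpoly * X ^ Fintype.card n := by
  have hM : M = fromBlocks M.toBlocks₁₁ M.toBlocks₁₂ 0 M.toBlocks₂₂ := by
    rw [← h₂₁, fromBlocks_toBlocks]
  obtain ⟨k, hk⟩ := h₂₂
  obtain ⟨Y, hY⟩ := fromBlocks_zero₂₁_pow M.toBlocks₁₁ M.toBlocks₁₂ M.toBlocks₂₂ k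
  rw [← hM] at hY
  have hnil : IsNilpotent M.toBlocks₂₂ := ⟨k, by rwa [hY, toBlocks_fromBlocks₂₂] at hk⟩
  rw [hM, charpoly_fromBlocks_zero₂₁, charpoly_eq_X_pow_of_isNilpotent hnil]
  simp

end Blocks

section ExtMat

variable {G V : Type*} [Group G] [Fintype G]

theorem MonoidAlgebra.coeff_mul_apply_fintype {k : Type*} [Semiring k] (x y : MonoidAlgebra k G)
    (z : G) :
    (x * y).coeff z = ∑ f : G, x.coeff f * y.coeff (f⁻¹ * z) := by
  simp [coeff_mul_apply_left, Finsupp.sum_fintype]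

theorem extMat_mul [Fintype V] (A B : Matrix V V (MonoidAlgebra ℤ G)) :
    extMat (A * B) = extMat A * extMat B := by
  ext ⟨i, g⟩ ⟨j, h⟩
  simp only [extMat, Matrix.mul_apply, MonoidAlgebra.coeff_sum, Finset.sum_apply',
    coeff_mul_apply_fintype, Fintype.sum_prod_type]
  refine Finset.sum_congr rfl fun k _ => Fintype.sum_equiv (Equiv.mulLeft g) _ _ fun f => ?_
  simp [mul_assoc]

omit [Fintype G] in
theorem extMat_one [Fintype V] [DecidableEq G] [DecidableEq V] :
    extMat (1 : Matrix V V (MonoidAlgebra ℤ G)) = 1 := by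
  ext ⟨i, g⟩ ⟨j, h⟩
  by_cases hij : i = j <;>
    simp [extMat, one_apply, one_def, Finsupp.single_apply, hij, eq_inv_mul_iff_mul_eq]

theorem extMat_pow [Fintype V] [DecidableEq G] [DecidableEq V]
    (B : Matrix V V (MonoidAlgebra ℤ G)) (k : ℕ) :
    extMat (B ^ k) = extMat B ^ k := by
  induction k with
  | zero => exact extMat_one
  | succ k ih => rw [pow_succ, pow_succ, extMat_mul, ih]

theorem sum_extMat_apply (B : Matrix V V (MonoidAlgebra ℤ G)) (p : V × G) (j : V) :
    ∑ h : G, extMat B p (j, h) = augMat B p.1 j :=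
  Equiv.sum_comp (Equiv.mulLeft p.2⁻¹) fun g => (B p.1 j).coeff g

theorem coeff_uG [DecidableEq G] (g : G) : (uG G).coeff g = 1 := by
  simp [uG, Finsupp.single_apply]

theorem extMat_apply_eq_of_forall_eq_smul_uG [DecidableEq G] {B : Matrix V V (MonoidAlgebra ℤ G)}
    (hB : ∀ i j, ∃ c : ℤ, B i j = c • uG G) (i : V) (g g' : G) :
    extMat B (i, g) = extMat B (i, g') := by
  ext ⟨j, h⟩
  obtain ⟨c, hc⟩ := hB i j
  simp only [extMat, hc, coeff_smul_apply, coeff_uG]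

end ExtMat

section Shear

variable (G V : Type*) [One G] [DecidableEq G] [DecidableEq V]

def shearToOne : Matrix (V × G) (V × G) ℤ :=
  of fun p q => if p.2 ≠ 1 ∧ q = (p.1, 1) then 1 else 0

variable {G V}

theorem one_add_shearToOne_apply_one (q : V × G) (j : V) :
    (1 + shearToOne G V : Matrix (V × G) (V × G) ℤ) q (j, 1) = if q.1 = j then 1 else 0 := by
  obtain ⟨k, g⟩ := q
  rcases eq_or_ne k j with rfl | hk
  · by_cases hg : g = 1 <;> simp [shearToOne, one_apply, hg]
  · simp [shearToOne, one_apply, hk, hk.symm]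

variable [Fintype G] [Fintype V]

theorem shearToOne_mul_apply {n : Type*} (M : Matrix (V × G) n ℤ) (p : V × G) (q : n) :
    (shearToOne G V * M) p q = if p.2 = 1 then 0 else M (p.1, 1) q := by
  by_cases hp : p.2 = 1 <;> simp [shearToOne, Matrix.mul_apply, hp, ite_and]

theorem shearToOne_mul_self : shearToOne G V * shearToOne G V = 0 := by
  ext p q
  rw [shearToOne_mul_apply]
  simp [shearToOne]

theorem mul_one_add_shearToOne_apply_one {m : Type*} (M : Matrix m (V × G) ℤ) (p : m) (j : V) :
    (M * (1 + shearToOne G V : Matrix (V × G) (V × G) ℤ)) p (j, 1) = ∑ g, M p (j, g) := by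
  simp only [Matrix.mul_apply, one_add_shearToOne_apply_one, Fintype.sum_prod_type, mul_ite,
    mul_one, mul_zero]
  rw [Finset.sum_comm]
  simp

theorem one_sub_shearToOne_mul_apply {n : Type*} (M : Matrix (V × G) n ℤ) (p : V × G) (q : n) :
    ((1 - shearToOne G V : Matrix (V × G) (V × G) ℤ) * M) p q =
      if p.2 = 1 then M p q else M p q - M (p.1, 1) q := by
  rw [Matrix.sub_mul, Matrix.one_mul, Matrix.sub_apply, shearToOne_mul_apply]
  split_ifs <;> simp

variable (G V) in
@[simps]
def shearUnit : (Matrix (V × G) (V × G) ℤ)ˣ where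
  val := 1 - shearToOne G V
  inv := 1 + shearToOne G V
  val_inv := by simp [mul_add, sub_mul, shearToOne_mul_self]
  inv_val := by simp [add_mul, mul_sub, shearToOne_mul_self]

theorem shearUnit_mul_mul_apply_eq_zero {n : Type*} {M : Matrix (V × G) (V × G) ℤ}
    (hM : ∀ i g, M (i, g) = M (i, 1)) (N : Matrix (V × G) n ℤ) {p : V × G} (hp : p.2 ≠ 1)
    (q : n) : ((shearUnit G V : Matrix (V × G) (V × G) ℤ) * M * N) p q = 0 := by
  obtain ⟨i, g⟩ := p
  rw [Matrix.mul_apply]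
  refine Finset.sum_eq_zero fun r _ => ?_
  rw [val_shearUnit, one_sub_shearToOne_mul_apply, if_neg hp, hM, sub_self, zero_mul]

end Shear

section SplitOne

variable (G V : Type*) [One G] [DecidableEq G]

def sumProdNeOneEquiv : V ⊕ V × {g : G // g ≠ 1} ≃ V × G where
  toFun := Sum.elim (fun j => (j, 1)) (fun p => (p.1, p.2.1))
  invFun p := if hp : p.2 = 1 then .inl p.1 else .inr (p.1, ⟨p.2, hp⟩)
  left_inv := by rintro (j | ⟨j, g, hg⟩) <;> simp [*]
  right_inv := by rintro ⟨j, g⟩; by_cases hg : g = 1 <;> simp [hg]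

variable {G V} in
theorem card_prod_ne_one [Fintype G] [Fintype V] :
    Fintype.card (V × {g : G // g ≠ 1}) = Fintype.card V * (Fintype.card G - 1) := by
  simp [Fintype.card_prod, Fintype.card_subtype_compl]

end SplitOne

section Conj

variable {G V : Type*} [Group G] [Fintype G] [DecidableEq G] [Fintype V] [DecidableEq V]

theorem shearUnit_conj_extMat_apply_one (B : Matrix V V (MonoidAlgebra ℤ G)) (p : V × G)
    (j : V) : ((shearUnit G V : Matrix (V × G) (V × G) ℤ) * extMat B *
      (↑(shearUnit G V)⁻¹ : Matrix (V × G) (V × G) ℤ)) p (j, 1) =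
      if p.2 = 1 then augMat B p.1 j else 0 := by
  rw [Matrix.mul_assoc, val_shearUnit, val_inv_shearUnit,
    one_sub_shearToOne_mul_apply, mul_one_add_shearToOne_apply_one,
    mul_one_add_shearToOne_apply_one, sum_extMat_apply, sum_extMat_apply]
  split_ifs <;> simp

noncomputable def extMatSplit (B : Matrix V V (MonoidAlgebra ℤ G)) :
    Matrix (V ⊕ V × {g : G // g ≠ 1}) (V ⊕ V × {g : G // g ≠ 1}) ℤ :=
  reindex (sumProdNeOneEquiv G V).symm (sumProdNeOneEquiv G V).symm
    ((shearUnit G V : Matrix (V × G) (V × G) ℤ) * extMat B *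
      (↑(shearUnit G V)⁻¹ : Matrix (V × G) (V × G) ℤ))

theorem charpoly_extMatSplit (B : Matrix V V (MonoidAlgebra ℤ G)) :
    (extMatSplit B).charpoly = (extMat B).charpoly := by
  rw [extMatSplit, charpoly_reindex, coe_units_inv, charpoly_units_conj]

theorem extMatSplit_pow (B : Matrix V V (MonoidAlgebra ℤ G)) (k : ℕ) :
    extMatSplit B ^ k = extMatSplit (B ^ k) := by
  rw [extMatSplit, extMatSplit, extMat_pow, ← Units.conj_pow, ← coe_reindexAlgEquiv ℤ ℤ,
    map_pow]

theorem toBlocks₁₁_extMatSplit (B : Matrix V V (MonoidAlgebra ℤ G)) :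
    (extMatSplit B).toBlocks₁₁ = augMat B := by
  ext i j
  exact (shearUnit_conj_extMat_apply_one B (i, 1) j).trans (if_pos rfl)

theorem toBlocks₂₁_extMatSplit (B : Matrix V V (MonoidAlgebra ℤ G)) :
    (extMatSplit B).toBlocks₂₁ = 0 := by
  ext p j
  exact (shearUnit_conj_extMat_apply_one B (p.1, p.2) j).trans (if_neg p.2.2)

theorem toBlocks₂₂_extMatSplit_eq_zero {B : Matrix V V (MonoidAlgebra ℤ G)}
    (hB : ∀ i j, ∃ c : ℤ, B i j = c • uG G) : (extMatSplit B).toBlocks₂₂ = 0 := by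
  ext p q
  exact shearUnit_mul_mul_apply_eq_zero (extMat_apply_eq_of_forall_eq_smul_uG hB · · 1) _ p.2.2 _

end Conj

theorem charpoly_ext_eq {G V : Type*} [Group G] [Fintype G] [DecidableEq G]
    [Fintype V] [DecidableEq V]
    (B : Matrix V V (MonoidAlgebra ℤ G))
    (h : ∃ ℓ : ℕ, ∀ i j, ∃ c : ℤ, (B ^ ℓ) i j = c • uG G) :
    (extMat B).charpoly =
      (augMat B).charpoly * X ^ (Fintype.card V * (Fintype.card G - 1)) := by
  obtain ⟨ℓ, hℓ⟩ := h
  have hnil : (extMatSplit B ^ ℓ).toBlocks₂₂ = 0 := by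
    rw [extMatSplit_pow]
    exact toBlocks₂₂_extMatSplit_eq_zero hℓ
  rw [← charpoly_extMatSplit, charpoly_eq_mul_X_pow_of_toBlocks₂₁_eq_zero _
    (toBlocks₂₁_extMatSplit B) ⟨ℓ, hnil⟩, toBlocks₁₁_extMatSplit, card_prod_ne_one]
end

section
/- Let G be a finite group and let A be an irreducible square matrix over ℤ≥0[G]. Then for every k ∈ ℕ, the weight group satisfies W_i(A^{k|G|+1}) = W_i(A) for every index i. In particular, if g ∈ G satisfies π_g((A^ℓ)_{i,i}) > 0 for some ℓ, then π_g((A^{ℓ(k|G|+1)})_{i,i}) > 0. -/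
open MonoidAlgebra Matrix

/-
If `g` occurs in `(A ^ ℓ) i i`, then `g ^ m` occurs in `(A ^ (ℓ * m)) i i`: concatenating `m`
copies of a closed walk at `i` gives a closed walk, and nonnegative coefficients cannot cancel.
For `m = k |G| + 1` Lagrange's theorem gives `g ^ m = g`, which yields the second claim and the
inclusion `W_i(A) ⊆ W_i(A ^ m)`; the reverse inclusion holds since the powers of `A ^ m` are
powers of `A`.
-/

namespace MonoidAlgebra

variable {R M : Type*} [Semiring R] [PartialOrder R]

section Mul

variable [Mul M]

theorem coeff_mul_nonneg [IsOrderedRing R] {x y : MonoidAlgebra R M} (hx : ∀ m, 0 ≤ x.coeff m)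
    (hy : ∀ m, 0 ≤ y.coeff m) (m : M) : 0 ≤ (x * y).coeff m := by
  classical
  rw [coeff_mul]
  refine Finset.sum_nonneg fun m₁ _ ↦ Finset.sum_nonneg fun m₂ _ ↦ ?_
  dsimp only
  split_ifs
  exacts [mul_nonneg (hx m₁) (hy m₂), le_rfl]

theorem coeff_mul_mul_pos [IsStrictOrderedRing R] {x y : MonoidAlgebra R M}
    (hx : ∀ m, 0 ≤ x.coeff m) (hy : ∀ m, 0 ≤ y.coeff m) {a b : M} (ha : 0 < x.coeff a)
    (hb : 0 < y.coeff b) : 0 < (x * y).coeff (a * b) := by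
  classical
  rw [coeff_mul]
  have hterm : ∀ m₁ m₂,
      0 ≤ if m₁ * m₂ = a * b then x.coeff m₁ * y.coeff m₂ else (0 : R) := fun m₁ m₂ ↦ by
    split_ifs
    exacts [mul_nonneg (hx m₁) (hy m₂), le_rfl]
  calc 0 < x.coeff a * y.coeff b := mul_pos ha hb
    _ = if a * b = a * b then x.coeff a * y.coeff b else 0 := (if_pos rfl).symm
    _ ≤ ∑ m₂ ∈ y.coeff.support, if a * m₂ = a * b then x.coeff a * y.coeff m₂ else 0 :=
      Finset.single_le_sum (fun m₂ _ ↦ hterm a m₂) (Finsupp.mem_support_iff.2 hb.ne')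
    _ ≤ ∑ m₁ ∈ x.coeff.support, ∑ m₂ ∈ y.coeff.support,
          if m₁ * m₂ = a * b then x.coeff m₁ * y.coeff m₂ else 0 :=
      Finset.single_le_sum (f := fun m₁ ↦ ∑ m₂ ∈ y.coeff.support,
          if m₁ * m₂ = a * b then x.coeff m₁ * y.coeff m₂ else 0)
        (fun m₁ _ ↦ Finset.sum_nonneg fun m₂ _ ↦ hterm m₁ m₂) (Finsupp.mem_support_iff.2 ha.ne')

end Mul

variable (R M) [Monoid M] [IsOrderedRing R]

def nonnegCoeff : Subsemiring (MonoidAlgebra R M) where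
  carrier := {x | ∀ m, 0 ≤ x.coeff m}
  mul_mem' hx hy := coeff_mul_nonneg hx hy
  one_mem' m := by
    classical
    rw [one_def, coeff_single, Finsupp.single_apply]
    split_ifs
    exacts [zero_le_one, le_rfl]
  add_mem' hx hy m := add_nonneg (hx m) (hy m)
  zero_mem' _ := le_rfl

variable {R M}

@[simp]
theorem mem_nonnegCoeff {x : MonoidAlgebra R M} : x ∈ nonnegCoeff R M ↔ ∀ m, 0 ≤ x.coeff m :=
  Iff.rfl

end MonoidAlgebra

namespace Matrix

variable {R M V : Type*} [Semiring R] [PartialOrder R] [IsStrictOrderedRing R] [Monoid M]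
  [Fintype V] [DecidableEq V]

theorem coeff_mul_apply_mul_pos {B C : Matrix V V (MonoidAlgebra R M)}
    (hB : B ∈ (nonnegCoeff R M).matrix) (hC : C ∈ (nonnegCoeff R M).matrix) {i j l : V} {a b : M}
    (ha : 0 < (B i j).coeff a) (hb : 0 < (C j l).coeff b) : 0 < ((B * C) i l).coeff (a * b) := by
  rw [mul_apply, coeff_sum, Finsupp.finsetSum_apply]
  exact Finset.sum_pos' (fun j' _ ↦ coeff_mul_nonneg (hB i j') (hC j' l) _)
    ⟨j, Finset.mem_univ j, coeff_mul_mul_pos (hB i j) (hC j l) ha hb⟩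

theorem coeff_pow_mul_apply_pos {A : Matrix V V (MonoidAlgebra R M)}
    (hA : A ∈ (nonnegCoeff R M).matrix) {ℓ : ℕ} {i : V} {g : M}
    (hg : 0 < ((A ^ ℓ) i i).coeff g) (m : ℕ) : 0 < ((A ^ (ℓ * m)) i i).coeff (g ^ m) := by
  induction m with
  | zero => simp
  | succ m ih =>
    rw [Nat.mul_succ, pow_add, pow_succ]
    exact coeff_mul_apply_mul_pos (pow_mem hA _) (pow_mem hA _) ih hg

end Matrix

theorem weight_group_of_power_general {G V : Type*} [Group G] [Fintype G]
    [Fintype V] [DecidableEq V]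
    (A : Matrix V V (MonoidAlgebra ℤ G))
    (hpos : ∀ i j (g : G), 0 ≤ (A i j).coeff g) :
    (∀ (k : ℕ) (i : V) (g : G),
        (∃ n : ℕ, 0 < (((A ^ (k * Fintype.card G + 1)) ^ n) i i).coeff g) ↔
          ∃ n : ℕ, 0 < ((A ^ n) i i).coeff g) ∧
    (∀ (k ℓ : ℕ) (i : V) (g : G), 0 < ((A ^ ℓ) i i).coeff g →
        0 < ((A ^ (ℓ * (k * Fintype.card G + 1))) i i).coeff g) := by
  have hA : A ∈ (nonnegCoeff ℤ G).matrix := hpos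
  have hpow : ∀ (k ℓ : ℕ) (i : V) (g : G), 0 < ((A ^ ℓ) i i).coeff g →
      0 < ((A ^ (ℓ * (k * Fintype.card G + 1))) i i).coeff g := by
    intro k ℓ i g hg
    have hlagrange : g ^ (k * Fintype.card G + 1) = g := by
      rw [pow_succ, mul_comm, pow_mul, pow_card_eq_one, one_pow, one_mul]
    simpa only [hlagrange] using coeff_pow_mul_apply_pos hA hg (k * Fintype.card G + 1)
  refine ⟨fun k i g ↦ ⟨fun ⟨n, hn⟩ ↦ ⟨_, by rwa [← pow_mul] at hn⟩, fun ⟨n, hn⟩ ↦ ⟨n, ?_⟩⟩, hpow⟩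
  rw [← pow_mul, mul_comm]
  exact hpow k n i g hn

theorem weight_group_of_power {G V : Type*} [Group G] [Fintype G]
    [Fintype V] [DecidableEq V]
    (A : Matrix V V (MonoidAlgebra ℤ G))
    (hpos : ∀ i j (g : G), 0 ≤ (A i j).coeff g)
    (hirr : ∀ i j, ∃ n : ℕ, (A ^ n) i j ≠ 0) :
    (∀ (k : ℕ) (i : V) (g : G),
        (∃ n : ℕ, 0 < (((A ^ (k * Fintype.card G + 1)) ^ n) i i).coeff g) ↔
          ∃ n : ℕ, 0 < ((A ^ n) i i).coeff g) ∧
    (∀ (k ℓ : ℕ) (i : V) (g : G), 0 < ((A ^ ℓ) i i).coeff g →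
        0 < ((A ^ (ℓ * (k * Fintype.card G + 1))) i i).coeff g) :=
  weight_group_of_power_general A hpos
end
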